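/- Let p ∈ V with ⟨p,p⟩ = −1 (a point sphere complex), and let r_i, r_j ∈ V be lightlike with ⟨p,r_i⟩ ≠ 0, ⟨p,r_j⟩ ≠ 0 and ⟨r_i,r_j⟩ ≠ 0. Define m := ⟨p,r_j⟩·r_i − ⟨p,r_i⟩·r_j. Then ⟨m,m⟩ ≠ 0, ⟨m,p⟩ = 0 (so σ_m is a Möbius transformation, fixing the point sphere complex), and σ_m maps the line spanned by r_i to the line spanned by r_j. -/
import Mathlib


/-- The bilinear form of signature (4,2) on ℝ⁶ (ℝ^{4,2}). -/
noncomputable def B (x y : Fin 6 → ℝ) : ℝ :=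
  -(x 0 * y 0) + x 1 * y 1 + x 2 * y 2 + x 3 * y 3 + x 4 * y 4 - x 5 * y 5

/-- The Lie inversion with respect to the linear sphere complex determined by `a`. -/
noncomputable def lieInv (a x : Fin 6 → ℝ) : Fin 6 → ℝ :=
  x - (2 * B x a / B a a) • a

lemma B_comm (x y : Fin 6 → ℝ) : B x y = B y x := by simp [B]; ring

lemma B_expand (a b : ℝ) (x y z : Fin 6 → ℝ) :
    B (a • x - b • y) z = a * B x z - b * B y z := by
  simp [B, Pi.sub_apply, Pi.smul_apply, smul_eq_mul]; ring

lemma B_expand' (a b : ℝ) (x y z : Fin 6 → ℝ) :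
    B z (a • x - b • y) = a * B z x - b * B z y := by
  simp [B, Pi.sub_apply, Pi.smul_apply, smul_eq_mul]; ring

theorem moebius_inversion_edge (p ri rj : Fin 6 → ℝ)
    (hp : B p p = -1) (hri : B ri ri = 0) (hrj : B rj rj = 0)
    (hpi : B p ri ≠ 0) (hpj : B p rj ≠ 0) (hij : B ri rj ≠ 0) :
    let m : Fin 6 → ℝ := B p rj • ri - B p ri • rj
    B m m ≠ 0 ∧ B m p = 0 ∧ ∃ c : ℝ, c ≠ 0 ∧ lieInv m ri = c • rj := by
  intro m
  have hmm : B m m = -2 * (B p ri * (B p rj * B ri rj)) := by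
    show B (B p rj • ri - B p ri • rj) (B p rj • ri - B p ri • rj) = _
    rw [B_expand, B_expand', B_expand', hri, hrj, B_comm rj ri]
    ring
  have hmm0 : B m m ≠ 0 := by
    rw [hmm]; positivity
  refine ⟨hmm0, ?_, ?_⟩
  · show B (B p rj • ri - B p ri • rj) p = 0
    rw [B_expand, B_comm ri p, B_comm rj p]; ring
  · refine ⟨B p ri / B p rj, div_ne_zero hpi hpj, ?_⟩
    have hrm : B ri m = -(B p ri * B ri rj) := by
      show B ri (B p rj • ri - B p ri • rj) = _
      rw [B_expand', hri]; ring
    unfold lieInv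
    rw [hrm, hmm]
    have hc : 2 * -(B p ri * B ri rj) / (-2 * (B p ri * (B p rj * B ri rj)))
        = 1 / B p rj := by
      field_simp
    rw [hc]
    show ri - (1 / B p rj) • (B p rj • ri - B p ri • rj) = _
    funext k
    simp [Pi.sub_apply, Pi.smul_apply, smul_eq_mul]
    field_simp
    ring
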